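/- Let (X,d) be a metric space and let M be a positive integer such that for every x ∈ X and every r > 0, any subset of the closed ball B^cl(x,r) whose distinct points are at pairwise distance strictly greater than r has cardinality at most M. Let μ be a Borel measure on X that is finite on every bounded Borel set and positive on every nonempty open set. Then for every s > 0 and every f ∈ L^1(μ), ‖A_s f‖_{L^1(μ)} ≤ M ‖f‖_{L^1(μ)}. -/

import Mathlib

open MeasureTheory Metric ENNReal

/-- The averaging operator `A_s f(x) = (1/μ(B^cl(x,s))) ∫_{B^cl(x,s)} f dμ`
over closed balls. -/
noncomputable def avgOp {X : Type*} [MetricSpace X] [MeasurableSpace X]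
    (μ : Measure X) (r : ℝ) (f : X → ℝ) (x : X) : ℝ :=
  (μ (closedBall x r)).toReal⁻¹ * ∫ y in closedBall x r, f y ∂μ

/-! By Tonelli, `‖A_s f‖₁ ≤ ∫ |f y| K(y) dμ(y)` with `K(y) = ∫_{B(y,s)} μ(B(x,s))⁻¹ dμ(x)`, so it
suffices to show `K(y) ≤ M`. Restrict to the points of `B(y,s)` with `μ(B(x,s)) ≥ 1/n`, so that the
infimum `m` of these ball measures is positive, and pick `x₁` whose ball has measure almost `m`: the
points within distance `s` of `x₁` contribute at most `μ(B(x₁,s)) / m ≈ 1` to `K(y)`, while any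
`s`-separated set of the remaining points extends by `x₁`, so it has at most `M - 1` elements and
induction applies.
Measurability of `x ↦ μ(B(x,s))`, needed for Tonelli, uses separability of `X`, which follows from `μ`
being σ-finite and positive on open sets: disjoint balls around a maximal separated set are
countably many. -/

section Separated

variable {X : Type*} [PseudoMetricSpace X]

theorem card_le_of_subset_diff_closedBall {T : Set X} {s : ℝ} {k : ℕ} {x : X} (hs : 0 ≤ s)
    (hx : x ∈ T)
    (hT : ∀ t : Finset X, ↑t ⊆ T → (t : Set X).Pairwise (s < dist · ·) → t.card ≤ k + 1)
    (t : Finset X) (ht : ↑t ⊆ T \ closedBall x s) (hsep : (t : Set X).Pairwise (s < dist · ·)) :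
    t.card ≤ k := by
  classical
  have hxt : x ∉ t := fun h => (ht h).2 (mem_closedBall_self hs)
  have hfar : ∀ y ∈ t, s < dist y x := fun y hy => not_le.mp (ht hy).2
  have hcard := hT (insert x t)
    (by rw [Finset.coe_insert]; exact Set.insert_subset hx (ht.trans Set.sdiff_subset))
    (by
      rw [Finset.coe_insert]
      exact hsep.insert fun y hy _ => ⟨dist_comm x y ▸ hfar y hy, hfar y hy⟩)
  rw [Finset.card_insert_of_notMem hxt] at hcard
  omega

theorem exists_forall_dist_le_of_maximal {ε : ℝ} (hε : 0 ≤ ε) {S : Set X}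
    (hS : Maximal (fun S : Set X => S.Pairwise (ε < dist · ·)) S) (x : X) :
    ∃ y ∈ S, dist x y ≤ ε := by
  by_contra! hfar
  have hxS : x ∉ S := fun hx => (hfar x hx).not_ge (by simpa using hε)
  have hins : (insert x S).Pairwise (ε < dist · ·) :=
    hS.prop.insert fun y hy _ => ⟨hfar y hy, dist_comm x y ▸ hfar y hy⟩
  exact hxS (hS.mem_of_prop_insert hins)

theorem exists_maximal_pairwise_lt_dist (ε : ℝ) :
    ∃ S : Set X, Maximal (fun S : Set X => S.Pairwise (ε < dist · ·)) S :=
  zorn_subset _ fun c hc hchain =>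
    ⟨⋃₀ c, hchain.pairwise_sUnion.mpr hc, fun _ => Set.subset_sUnion_of_mem⟩

end Separated

section Packing

variable {X : Type*} [PseudoMetricSpace X] [MeasurableSpace X] [OpensMeasurableSpace X]
  {μ : Measure X}

theorem setLIntegral_inv_measure_closedBall_le_mul {s : ℝ} (hs : 0 ≤ s)
    (hball : ∀ x, μ (closedBall x s) ≠ ∞) {δ c : ℝ≥0∞} (hδ : δ ≠ 0) (hc : 1 < c) (k : ℕ) :
    ∀ {T : Set X}, MeasurableSet T →
      (∀ t : Finset X, ↑t ⊆ T → (t : Set X).Pairwise (s < dist · ·) → t.card ≤ k) →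
      (∀ x ∈ T, δ ≤ μ (closedBall x s)) →
      ∫⁻ x in T, (μ (closedBall x s))⁻¹ ∂μ ≤ k * c := by
  induction k with
  | zero =>
    intro T _ hsep _
    have hT : T = ∅ := Set.eq_empty_of_forall_notMem fun x hx => by
      simpa using hsep {x} (by simpa using hx) (by simp)
    simp [hT]
  | succ k ih =>
    intro T hT hsep hδT
    rcases T.eq_empty_or_nonempty with rfl | ⟨x₀, hx₀⟩
    · simp
    set m := ⨅ x ∈ T, μ (closedBall x s)
    have hm0 : m ≠ 0 := (hδ.bot_lt.trans_le (le_iInf₂ hδT)).ne'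
    have hmtop : m ≠ ∞ := ne_top_of_le_ne_top (hball x₀) (iInf₂_le x₀ hx₀)
    obtain ⟨x₁, hx₁, hx₁m⟩ : ∃ x ∈ T, μ (closedBall x s) < m * c := by
      have hlt : m < m * c := by
        simpa [mul_comm] using ENNReal.mul_lt_mul_left hm0 hmtop hc
      simpa [m, iInf_lt_iff] using hlt
    have hnear : ∫⁻ x in T ∩ closedBall x₁ s, (μ (closedBall x s))⁻¹ ∂μ ≤ c := calc
      _ ≤ ∫⁻ _ in T ∩ closedBall x₁ s, m⁻¹ ∂μ :=
          setLIntegral_mono measurable_const fun x hx => ENNReal.inv_le_inv' (iInf₂_le x hx.1)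
      _ = m⁻¹ * μ (T ∩ closedBall x₁ s) := setLIntegral_const _ _
      _ ≤ m⁻¹ * (m * c) := by
          gcongr
          exact (measure_mono Set.inter_subset_right).trans hx₁m.le
      _ = c := by rw [← mul_assoc, ENNReal.inv_mul_cancel hm0 hmtop, one_mul]
    have hfar : ∫⁻ x in T \ closedBall x₁ s, (μ (closedBall x s))⁻¹ ∂μ ≤ k * c :=
      ih (hT.diff measurableSet_closedBall) (card_le_of_subset_diff_closedBall hs hx₁ hsep)
        fun x hx => hδT x hx.1
    calc _ = _ + _ := (lintegral_inter_add_sdiff _ _ measurableSet_closedBall).symm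
      _ ≤ c + k * c := add_le_add hnear hfar
      _ = (k + 1 : ℕ) * c := by push_cast; ring

theorem setLIntegral_inv_measure_closedBall_le {s : ℝ} (hs : 0 ≤ s)
    (hball : ∀ x, μ (closedBall x s) ≠ ∞) (hmeas : Measurable fun x => μ (closedBall x s))
    (k : ℕ) {T : Set X} (hT : MeasurableSet T)
    (hsep : ∀ t : Finset X, ↑t ⊆ T → (t : Set X).Pairwise (s < dist · ·) → t.card ≤ k)
    (hpos : ∀ x ∈ T, μ (closedBall x s) ≠ 0) :
    ∫⁻ x in T, (μ (closedBall x s))⁻¹ ∂μ ≤ k := by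
  set T' : ℕ → Set X := fun n => T ∩ {x | (n : ℝ≥0∞)⁻¹ ≤ μ (closedBall x s)}
  have hT'mono : Monotone T' := fun a b hab => Set.inter_subset_inter_right _ fun x hx =>
    (ENNReal.inv_le_inv.mpr (Nat.cast_le.mpr hab)).trans hx
  have hcover : T ⊆ ⋃ n, T' n := fun x hx => by
    obtain ⟨n, hn⟩ := ENNReal.exists_inv_nat_lt (hpos x hx)
    exact Set.mem_iUnion.mpr ⟨n, hx, hn.le⟩
  have hlevel : ∀ n, ∫⁻ x in T' n, (μ (closedBall x s))⁻¹ ∂μ ≤ k := fun n => by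
    rw [← mul_one (k : ℝ≥0∞)]
    exact ENNReal.le_mul_of_forall_lt (Or.inr one_ne_top) (Or.inr one_ne_zero) fun a ha c hc =>
      (setLIntegral_inv_measure_closedBall_le_mul hs hball
        (ENNReal.inv_ne_zero.mpr (natCast_ne_top n)) hc k (hT.inter (hmeas measurableSet_Ici))
        (fun t ht => hsep t (ht.trans Set.inter_subset_left)) fun x hx => hx.2).trans
      (by gcongr)
  calc ∫⁻ x in T, (μ (closedBall x s))⁻¹ ∂μ
      ≤ ∫⁻ x in ⋃ n, T' n, (μ (closedBall x s))⁻¹ ∂μ := lintegral_mono_set hcover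
    _ = ⨆ n, ∫⁻ x in T' n, (μ (closedBall x s))⁻¹ ∂μ :=
        setLIntegral_iUnion_of_directed _ hT'mono.directed_le
    _ ≤ k := iSup_le hlevel

end Packing

section Measure

variable {X : Type*} [PseudoMetricSpace X] [MeasurableSpace X]

theorem sigmaFinite_of_measure_closedBall_ne_top {μ : Measure X} (h : ∀ x r, μ (closedBall x r) ≠ ∞) :
    SigmaFinite μ := by
  rcases isEmpty_or_nonempty X with _ | ⟨⟨x₀⟩⟩
  · rw [μ.eq_zero_of_isEmpty]
    infer_instance
  · exact ⟨⟨⟨fun n => closedBall x₀ n, fun _ => Set.mem_univ _, fun n => (h x₀ n).lt_top,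
      iUnion_closedBall_nat x₀⟩⟩⟩

theorem secondCountableTopology_of_isOpenPosMeasure [OpensMeasurableSpace X] (μ : Measure X)
    [SFinite μ] [μ.IsOpenPosMeasure] : SecondCountableTopology X := by
  refine secondCountable_of_almost_dense_set fun ε hε => ?_
  obtain ⟨S, hS⟩ := exists_maximal_pairwise_lt_dist (X := X) ε
  have hdisj : Pairwise (Function.onFun Disjoint fun p : S => ball (p : X) (ε / 2)) :=
    fun p q hpq => ball_disjoint_ball (by
      linarith [hS.prop p.2 q.2 (Subtype.coe_injective.ne hpq)])
  have hcount := Measure.countable_meas_pos_of_disjoint_iUnion (μ := μ)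
    (fun _ => measurableSet_ball) hdisj
  simp only [measure_ball_pos μ _ (half_pos hε), Set.ofPred_true, Set.countable_univ_iff] at hcount
  exact ⟨S, S.to_countable, exists_forall_dist_le_of_maximal hε.le hS⟩

theorem measurable_measure_closedBall [OpensMeasurableSpace X] [SecondCountableTopology X]
    (μ : Measure X) [SFinite μ] (r : ℝ) : Measurable fun x => μ (closedBall x r) :=
  measurable_measure_prodMk_left (measurableSet_le (measurable_snd.dist measurable_fst)
    measurable_const)

end Measure

section Fubini

variable {X : Type*} [PseudoMetricSpace X] [MeasurableSpace X] [OpensMeasurableSpace X]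
  [SecondCountableTopology X] (μ : Measure X) [SFinite μ]

theorem lintegral_mul_setLIntegral_closedBall_comm {w h : X → ℝ≥0∞} (hw : Measurable w)
    (hh : Measurable h) (r : ℝ) :
    ∫⁻ x, w x * ∫⁻ y in closedBall x r, h y ∂μ ∂μ
      = ∫⁻ y, (∫⁻ x in closedBall y r, w x ∂μ) * h y ∂μ := by
  let F : X → X → ℝ≥0∞ := fun x y => if dist y x ≤ r then w x * h y else 0
  have hF : Measurable (Function.uncurry F) :=
    Measurable.ite (measurableSet_le (measurable_snd.dist measurable_fst) measurable_const)
      ((hw.comp measurable_fst).mul (hh.comp measurable_snd)) measurable_const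
  have hleft : ∀ x, w x * ∫⁻ y in closedBall x r, h y ∂μ = ∫⁻ y, F x y ∂μ := fun x => by
    rw [← lintegral_const_mul _ hh, ← lintegral_indicator measurableSet_closedBall]
    rfl
  have hright : ∀ y, (∫⁻ x in closedBall y r, w x ∂μ) * h y = ∫⁻ x, F x y ∂μ := fun y => by
    rw [← lintegral_mul_const _ hw, ← lintegral_indicator measurableSet_closedBall]
    congr with x
    simp [F, Set.indicator, mem_closedBall, dist_comm]
  simp_rw [hleft, hright]
  exact lintegral_lintegral_swap hF.aemeasurable

end Fubini

section Averaging

variable {X : Type*} [MetricSpace X] [MeasurableSpace X] (μ : Measure X)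

theorem avgOp_congr_ae {f g : X → ℝ} (h : f =ᵐ[μ] g) (r : ℝ) : avgOp μ r f = avgOp μ r g := by
  funext x
  rw [avgOp, avgOp, integral_congr_ae (ae_restrict_of_ae h)]

theorem enorm_avgOp_le (r : ℝ) (f : X → ℝ) (x : X) :
    ‖avgOp μ r f x‖ₑ ≤ (μ (closedBall x r))⁻¹ * ∫⁻ y in closedBall x r, ‖f y‖ₑ ∂μ := by
  rw [avgOp, enorm_mul, Real.enorm_eq_ofReal (inv_nonneg.mpr toReal_nonneg), ← toReal_inv]
  gcongr
  · exact ofReal_toReal_le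
  · exact enorm_integral_le_lintegral_enorm _

end Averaging

theorem eLpNorm_avgOp_le {X : Type*} [MetricSpace X] [MeasurableSpace X] [OpensMeasurableSpace X]
    [SecondCountableTopology X] (μ : Measure X) [SFinite μ] {r : ℝ} {K : ℝ≥0∞}
    (hK : ∀ y, ∫⁻ x in closedBall y r, (μ (closedBall x r))⁻¹ ∂μ ≤ K) {f : X → ℝ}
    (hf : AEStronglyMeasurable f μ) :
    eLpNorm (avgOp μ r f) 1 μ ≤ K * eLpNorm f 1 μ := by
  obtain ⟨g, hgm, hfg⟩ := hf
  have hg : Measurable fun y => ‖g y‖ₑ := hgm.measurable.enorm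
  rw [avgOp_congr_ae μ hfg, eLpNorm_congr_ae hfg, eLpNorm_one_eq_lintegral_enorm,
    eLpNorm_one_eq_lintegral_enorm]
  calc ∫⁻ x, ‖avgOp μ r g x‖ₑ ∂μ
      ≤ ∫⁻ x, (μ (closedBall x r))⁻¹ * ∫⁻ y in closedBall x r, ‖g y‖ₑ ∂μ ∂μ :=
        lintegral_mono (enorm_avgOp_le μ r g)
    _ = ∫⁻ y, (∫⁻ x in closedBall y r, (μ (closedBall x r))⁻¹ ∂μ) * ‖g y‖ₑ ∂μ :=
        lintegral_mul_setLIntegral_closedBall_comm μ (measurable_measure_closedBall μ r).inv hg r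
    _ ≤ ∫⁻ y, K * ‖g y‖ₑ ∂μ := lintegral_mono fun y => by gcongr; exact hK y
    _ = K * ∫⁻ y, ‖g y‖ₑ ∂μ := lintegral_const_mul K hg

theorem stmt5_general {X : Type*} [MetricSpace X] [MeasurableSpace X] [BorelSpace X]
    (M : ℕ)
    (hnet : ∀ (x : X) (r : ℝ), 0 < r → ∀ t : Finset X,
      (↑t : Set X) ⊆ closedBall x r →
      (∀ a ∈ t, ∀ b ∈ t, a ≠ b → r < dist a b) → t.card ≤ M)
    (μ : Measure X)
    (hfin : ∀ s : Set X, Bornology.IsBounded s → μ s < ⊤)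
    (hpos : ∀ U : Set X, IsOpen U → U.Nonempty → 0 < μ U) :
    ∀ s : ℝ, 0 < s → ∀ f : X → ℝ, Integrable f μ →
      eLpNorm (avgOp μ s f) 1 μ ≤ (M : ℝ≥0∞) * eLpNorm f 1 μ := by
  intro s hs f hf
  have hball : ∀ x r, μ (closedBall x r) ≠ ∞ := fun x r => (hfin _ isBounded_closedBall).ne
  have : μ.IsOpenPosMeasure := ⟨fun U hU hne => (hpos U hU hne).ne'⟩
  have := sigmaFinite_of_measure_closedBall_ne_top hball
  have := secondCountableTopology_of_isOpenPosMeasure μ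
  refine eLpNorm_avgOp_le μ (fun y => ?_) hf.aestronglyMeasurable
  exact setLIntegral_inv_measure_closedBall_le hs.le (hball · s)
    (measurable_measure_closedBall μ s) M measurableSet_closedBall
    (fun t ht hsep => hnet y s hs t ht fun a ha b hb => hsep ha hb)
    fun x _ => (measure_closedBall_pos μ x hs).ne'

/-- If every strict `r`-net inside a closed `r`-ball has at most `M` points, then
for every `s > 0` the averaging operator satisfies `‖A_s f‖_{L¹} ≤ M ‖f‖_{L¹}`. -/
theorem stmt5 {X : Type*} [MetricSpace X] [MeasurableSpace X] [BorelSpace X]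
    (M : ℕ) (hM : 0 < M)
    (hnet : ∀ (x : X) (r : ℝ), 0 < r → ∀ t : Finset X,
      (↑t : Set X) ⊆ closedBall x r →
      (∀ a ∈ t, ∀ b ∈ t, a ≠ b → r < dist a b) → t.card ≤ M)
    (μ : Measure X)
    (hfin : ∀ s : Set X, Bornology.IsBounded s → μ s < ⊤)
    (hpos : ∀ U : Set X, IsOpen U → U.Nonempty → 0 < μ U) :
    ∀ s : ℝ, 0 < s → ∀ f : X → ℝ, Integrable f μ →
      eLpNorm (avgOp μ s f) 1 μ ≤ (M : ℝ≥0∞) * eLpNorm f 1 μ :=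
  stmt5_general M hnet μ hfin hpos
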